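/- Suppose S is an n×n stochastic matrix that is a direct sum of k ≥ 2 stochastic matrices, and T = S + E is another stochastic matrix with ε = ‖E‖_∞/2. Then the matrix I − T has at least k singular values bounded above by 2ε√n; that is, the k-th smallest singular value of I − T is at most 2ε√n. -/

import Mathlib

/-! On the `k`-dimensional space of vectors that are constant on each block, `S` acts as the
identity, so `(I - T) v = -E v` and `‖(I - T) v‖₂ ≤ √n ‖E‖_∞ ‖v‖₂ = 2ε√n ‖v‖₂`. By the min-max
principle `(I - T)ᴴ (I - T)` then has at least `k` eigenvalues `≤ (2ε√n)²`, and `(I - T) (I - T)ᴴ`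
has the same eigenvalues since the two products have the same characteristic polynomial. -/

open Matrix BigOperators

/-- The maximum absolute row sum norm `‖·‖_∞` of a matrix. -/
noncomputable def infNorm {ι : Type*} [Fintype ι] (A : Matrix ι ι ℝ) : ℝ :=
  ⨆ i, ∑ j, |A i j|

open scoped InnerProductSpace
open Finset

namespace Matrix

variable {𝕜 : Type*} [RCLike 𝕜] {ι : Type*} [Fintype ι] [DecidableEq ι]

theorem eigenvalues_mul_conjTranspose_self_eq (M : Matrix ι ι 𝕜) :
    (isHermitian_mul_conjTranspose_self M).eigenvalues =
      (isHermitian_conjTranspose_mul_self M).eigenvalues :=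
  (IsHermitian.eigenvalues_eq_eigenvalues_iff _ _).2 (charpoly_mul_comm _ _)

namespace IsHermitian

variable {A : Matrix ι ι 𝕜} (hA : A.IsHermitian)

theorem repr_toEuclideanLin_apply (x : EuclideanSpace 𝕜 ι) (i : ι) :
    hA.eigenvectorBasis.repr (toEuclideanLin A x) i =
      hA.eigenvalues i * hA.eigenvectorBasis.repr x i := by
  have hu : toEuclideanLin A (hA.eigenvectorBasis i) =
      (hA.eigenvalues i : 𝕜) • hA.eigenvectorBasis i := by
    rw [toLpLin_apply, hA.mulVec_eigenvectorBasis, RCLike.real_smul_eq_coe_smul (K := 𝕜)]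
    rfl
  rw [OrthonormalBasis.repr_apply_apply, OrthonormalBasis.repr_apply_apply,
    ← isSymmetric_toEuclideanLin_iff.mpr hA, hu, inner_smul_left, RCLike.conj_ofReal]

theorem re_inner_toEuclideanLin_self (x : EuclideanSpace 𝕜 ι) :
    RCLike.re ⟪x, toEuclideanLin A x⟫_𝕜 =
      ∑ i, hA.eigenvalues i * ‖hA.eigenvectorBasis.repr x i‖ ^ 2 := by
  rw [← hA.eigenvectorBasis.repr.inner_map_map, PiLp.inner_apply, map_sum]
  refine sum_congr rfl fun i _ => ?_
  rw [repr_toEuclideanLin_apply, ← smul_eq_mul, inner_smul_right, RCLike.re_ofReal_mul,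
    inner_self_eq_norm_sq]

theorem norm_sq_eq_sum_repr (x : EuclideanSpace 𝕜 ι) :
    ‖x‖ ^ 2 = ∑ i, ‖hA.eigenvectorBasis.repr x i‖ ^ 2 := by
  rw [← hA.eigenvectorBasis.repr.norm_map, EuclideanSpace.norm_sq_eq]

theorem mul_norm_sq_lt_re_inner_toEuclideanLin_self {t : ℝ} {x : EuclideanSpace 𝕜 ι} (hx : x ≠ 0)
    (hlow : ∀ i, hA.eigenvalues i ≤ t → hA.eigenvectorBasis.repr x i = 0) :
    t * ‖x‖ ^ 2 < RCLike.re ⟪x, toEuclideanLin A x⟫_𝕜 := by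
  rw [hA.norm_sq_eq_sum_repr, hA.re_inner_toEuclideanLin_self, mul_sum]
  have hle (i : ι) : t * ‖hA.eigenvectorBasis.repr x i‖ ^ 2 ≤
      hA.eigenvalues i * ‖hA.eigenvectorBasis.repr x i‖ ^ 2 := by
    rcases le_or_gt (hA.eigenvalues i) t with hi | hi
    · simp [hlow i hi]
    · gcongr
  obtain ⟨i, hi⟩ : ∃ i, hA.eigenvectorBasis.repr x i ≠ 0 := by
    by_contra! h
    exact hx (hA.eigenvectorBasis.repr.map_eq_zero_iff.1 (PiLp.ext h))
  refine sum_lt_sum (fun i _ => hle i) ⟨i, mem_univ i, ?_⟩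
  have ht : t < hA.eigenvalues i := lt_of_not_ge fun h => hi (hlow i h)
  gcongr

theorem finrank_le_card_eigenvalues_le {t : ℝ} (V : Submodule 𝕜 (EuclideanSpace 𝕜 ι))
    (hV : ∀ x ∈ V, RCLike.re ⟪x, toEuclideanLin A x⟫_𝕜 ≤ t * ‖x‖ ^ 2) :
    Module.finrank 𝕜 V ≤ #{i | hA.eigenvalues i ≤ t} := by
  let lowCoords : V →ₗ[𝕜] {i // hA.eigenvalues i ≤ t} → 𝕜 :=
    LinearMap.pi fun i => (EuclideanSpace.proj i.1 : EuclideanSpace 𝕜 ι →L[𝕜] 𝕜).toLinearMap ∘ₗ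
      hA.eigenvectorBasis.repr.toLinearMap ∘ₗ V.subtype
  -- a vector of `V` with no component along eigenvalues `≤ t` would violate `hV`
  have hinj : Function.Injective lowCoords := by
    refine (injective_iff_map_eq_zero _).2 fun x hx => ?_
    by_contra hx0
    refine (hV x x.2).not_gt (hA.mul_norm_sq_lt_re_inner_toEuclideanLin_self ?_ fun i hi => ?_)
    · exact_mod_cast hx0
    · exact congrFun hx ⟨i, hi⟩
  simpa [Fintype.card_subtype] using LinearMap.finrank_le_finrank_of_injective hinj

end IsHermitian

theorem re_inner_toEuclideanLin_conjTranspose_mul_self (M : Matrix ι ι 𝕜)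
    (x : EuclideanSpace 𝕜 ι) :
    RCLike.re ⟪x, toEuclideanLin (Mᴴ * M) x⟫_𝕜 = ‖toEuclideanLin M x‖ ^ 2 := by
  rw [toLpLin_mul_same, LinearMap.comp_apply, toEuclideanLin_conjTranspose_eq_adjoint,
    LinearMap.adjoint_inner_right, inner_self_eq_norm_sq]

theorem finrank_le_card_eigenvalues_mul_conjTranspose_self_le (M : Matrix ι ι 𝕜) {t : ℝ}
    (V : Submodule 𝕜 (EuclideanSpace 𝕜 ι))
    (hV : ∀ x ∈ V, ‖toEuclideanLin M x‖ ^ 2 ≤ t * ‖x‖ ^ 2) :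
    Module.finrank 𝕜 V ≤ #{i | (isHermitian_mul_conjTranspose_self M).eigenvalues i ≤ t} := by
  rw [eigenvalues_mul_conjTranspose_self_eq]
  refine (isHermitian_conjTranspose_mul_self M).finrank_le_card_eigenvalues_le V fun x hx => ?_
  rw [re_inner_toEuclideanLin_conjTranspose_mul_self]
  exact hV x hx

end Matrix

section BlockConstant

variable {ι κ : Type*}

def blockConstantSubspace (K : Type*) [Field K] (c : ι → κ) : Submodule K (EuclideanSpace K ι) :=
  LinearMap.range ((WithLp.linearEquiv 2 K (ι → K)).symm.toLinearMap ∘ₗ LinearMap.funLeft K K c)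

theorem finrank_blockConstantSubspace {K : Type*} [Field K] [Fintype κ] {c : ι → κ}
    (hc : Function.Surjective c) :
    Module.finrank K (blockConstantSubspace K c) = Fintype.card κ := by
  have hinj : Function.Injective
      ((WithLp.linearEquiv 2 K (ι → K)).symm.toLinearMap ∘ₗ LinearMap.funLeft K K c) :=
    (WithLp.linearEquiv 2 K (ι → K)).symm.injective.comp
      (LinearMap.funLeft_injective_of_surjective K K c hc)
  rw [blockConstantSubspace, LinearMap.finrank_range_of_inj hinj,
    Module.finrank_fintype_fun_eq_card]

variable [Fintype ι]

theorem Matrix.mulVec_comp_eq_self {R : Type*} [Semiring R] {S : Matrix ι ι R} {c : ι → κ}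
    (hblock : ∀ i j, c i ≠ c j → S i j = 0) (hrow : ∀ i, ∑ j, S i j = 1) (a : κ → R) :
    S *ᵥ (a ∘ c) = a ∘ c := by
  ext i
  have hconst : ∀ j, S i j * a (c j) = S i j * a (c i) := fun j => by
    by_cases h : c i = c j
    · rw [h]
    · rw [hblock i j h, zero_mul, zero_mul]
  simp only [mulVec, dotProduct, Function.comp_apply, hconst, ← sum_mul, hrow, one_mul]

theorem sum_abs_le_infNorm (A : Matrix ι ι ℝ) (i : ι) : ∑ j, |A i j| ≤ infNorm A :=
  le_ciSup (f := fun i => ∑ j, |A i j|) (Set.finite_range _).bddAbove i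

theorem infNorm_nonneg (A : Matrix ι ι ℝ) : 0 ≤ infNorm A :=
  Real.iSup_nonneg fun _ => sum_nonneg fun _ _ => abs_nonneg _

variable [DecidableEq ι]

theorem norm_sq_toEuclideanLin_le (A : Matrix ι ι ℝ) (x : EuclideanSpace ℝ ι) :
    ‖toEuclideanLin A x‖ ^ 2 ≤ Fintype.card ι * infNorm A ^ 2 * ‖x‖ ^ 2 := by
  have hrow (i : ι) : |(A *ᵥ x) i| ≤ infNorm A * ‖x‖ :=
    calc |(A *ᵥ x) i| ≤ ∑ j, |A i j| * |x j| := by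
          simpa only [mulVec, dotProduct, abs_mul] using
            abs_sum_le_sum_abs (fun j => A i j * x j) univ
      _ ≤ ∑ j, |A i j| * ‖x‖ := by
          gcongr with j; exact PiLp.norm_apply_le x j
      _ ≤ infNorm A * ‖x‖ := by
          rw [← sum_mul]; gcongr; exact sum_abs_le_infNorm A i
  calc ‖toEuclideanLin A x‖ ^ 2 = ∑ i, |(A *ᵥ x) i| ^ 2 := by
        simp [EuclideanSpace.norm_sq_eq, toLpLin_apply]
    _ ≤ ∑ _i : ι, (infNorm A * ‖x‖) ^ 2 := by
        gcongr with i; exact hrow i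
    _ = Fintype.card ι * infNorm A ^ 2 * ‖x‖ ^ 2 := by
        rw [sum_const, card_univ, nsmul_eq_mul]; ring

theorem norm_sq_toEuclideanLin_one_sub_add_le {S E : Matrix ι ι ℝ} {c : ι → κ}
    (hblock : ∀ i j, c i ≠ c j → S i j = 0) (hrow : ∀ i, ∑ j, S i j = 1) :
    ∀ x ∈ blockConstantSubspace ℝ c,
      ‖toEuclideanLin (1 - (S + E)) x‖ ^ 2 ≤ Fintype.card ι * infNorm E ^ 2 * ‖x‖ ^ 2 := by
  rintro _ ⟨a, rfl⟩
  have hfix : (1 - (S + E)) *ᵥ (a ∘ c) = -(E *ᵥ (a ∘ c)) := by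
    rw [sub_mulVec, add_mulVec, one_mulVec, mulVec_comp_eq_self hblock hrow]
    abel
  change ‖WithLp.toLp 2 ((1 - (S + E)) *ᵥ (a ∘ c))‖ ^ 2 ≤ _ * ‖WithLp.toLp 2 (a ∘ c)‖ ^ 2
  rw [hfix, WithLp.toLp_neg, norm_neg]
  exact norm_sq_toEuclideanLin_le E (WithLp.toLp 2 (a ∘ c))

end BlockConstant

theorem stmt5_general {n k : ℕ}
    (S T E : Matrix (Fin n) (Fin n) ℝ)
    (c : Fin n → Fin k) (hc : Function.Surjective c)
    (hblock : ∀ i j, c i ≠ c j → S i j = 0)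
    (hSrow : ∀ i, ∑ j, S i j = 1)
    (hTE : T = S + E)
    (ε : ℝ) (hε : ε = infNorm E / 2) :
    ∃ s : Finset (Fin n), s.card = k ∧ ∀ i ∈ s,
      Real.sqrt ((Matrix.isHermitian_mul_conjTranspose_self (1 - T)).eigenvalues i)
        ≤ 2 * ε * Real.sqrt n := by
  have hr : 2 * ε * √n = √n * infNorm E := by rw [hε]; ring
  have hsmall : ∀ x ∈ blockConstantSubspace ℝ c,
      ‖toEuclideanLin (1 - T) x‖ ^ 2 ≤ (2 * ε * √n) ^ 2 * ‖x‖ ^ 2 := by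
    rw [hr, mul_pow, Real.sq_sqrt n.cast_nonneg, hTE]
    simpa only [Fintype.card_fin] using norm_sq_toEuclideanLin_one_sub_add_le hblock hSrow
  have hcount := finrank_le_card_eigenvalues_mul_conjTranspose_self_le (1 - T) _ hsmall
  rw [finrank_blockConstantSubspace hc, Fintype.card_fin] at hcount
  obtain ⟨s, hs, hcard⟩ := exists_subset_card_eq hcount
  refine ⟨s, hcard, fun i hi => ?_⟩
  have hr0 : 0 ≤ 2 * ε * √n := hr ▸ mul_nonneg (Real.sqrt_nonneg _) (infNorm_nonneg E)
  exact (Real.sqrt_le_left hr0).2 (mem_filter.1 (hs hi)).2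

/-- If `S` is a stochastic matrix that is a direct sum of `k ≥ 2` stochastic matrices
(block diagonal with respect to a surjective block assignment `c`), and `T = S + E`
is stochastic with `ε = ‖E‖_∞ / 2`, then `I - T` has at least `k` singular values
(square roots of eigenvalues of `(I-T)(I-T)ᴴ`, counted with multiplicity)
bounded above by `2ε√n`. -/
theorem stmt5 {n k : ℕ} (hk : 2 ≤ k)
    (S T E : Matrix (Fin n) (Fin n) ℝ)
    (c : Fin n → Fin k) (hc : Function.Surjective c)
    (hblock : ∀ i j, c i ≠ c j → S i j = 0)
    (hSpos : ∀ i j, 0 ≤ S i j) (hSrow : ∀ i, ∑ j, S i j = 1)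
    (hTpos : ∀ i j, 0 ≤ T i j) (hTrow : ∀ i, ∑ j, T i j = 1)
    (hTE : T = S + E)
    (ε : ℝ) (hε : ε = infNorm E / 2) :
    ∃ s : Finset (Fin n), s.card = k ∧ ∀ i ∈ s,
      Real.sqrt ((Matrix.isHermitian_mul_conjTranspose_self (1 - T)).eigenvalues i)
        ≤ 2 * ε * Real.sqrt n :=
  stmt5_general S T E c hc hblock hSrow hTE ε hε
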